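/- arXiv:math/0701550 — 2 statements merged into one kernel-verified Lean document; each statement's English description precedes it below -/
import Mathlib

section
/- Let X be a real Hilbert space, Φ : X → X a map with the (S₊) property, and Ψ : X → X quasimonotone. Then Φ + Ψ has the (S₊) property. -/
open Filter Topology

local notation "⟪" x ", " y "⟫" => @inner ℝ _ _ x y

variable {X : Type*} [NormedAddCommGroup X] [InnerProductSpace ℝ X] [CompleteSpace X]

/-- Weak convergence of a sequence in a Hilbert space. -/
def WeakConv (x : ℕ → X) (x₀ : X) : Prop :=
  ∀ y : X, Tendsto (fun n => ⟪x n, y⟫) atTop (nhds ⟪x₀, y⟫)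

/-- `limsup aₙ ≤ 0` for a real sequence (in the extended-real sense). -/
def LimsupLE0 (a : ℕ → ℝ) : Prop := ∀ ε : ℝ, 0 < ε → ∀ᶠ n in atTop, a n ≤ ε

/-- `limsup aₙ ≥ 0` for a real sequence (in the extended-real sense). -/
def LimsupGE0 (a : ℕ → ℝ) : Prop := ∀ ε : ℝ, 0 < ε → ∃ᶠ n in atTop, -ε ≤ a n

/-- The (S₊) property. -/
def SPlus (Φ : X → X) : Prop :=
  ∀ (x : ℕ → X) (x₀ : X), WeakConv x x₀ →
    LimsupLE0 (fun n => ⟪Φ (x n), x n - x₀⟫) → Tendsto x atTop (nhds x₀)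

/-- Quasimonotonicity. -/
def Quasimonotone (Φ : X → X) : Prop :=
  ∀ (x : ℕ → X) (x₀ : X), WeakConv x x₀ →
    LimsupGE0 (fun n => ⟪Φ (x n), x n - x₀⟫)

/-- Demicontinuity: norm-to-weak sequential continuity. -/
def Demicontinuous (Φ : X → X) : Prop :=
  ∀ (x : ℕ → X) (x₀ : X), Tendsto x atTop (nhds x₀) →
    WeakConv (fun n => Φ (x n)) (Φ x₀)

lemma weakConv_comp {x : ℕ → X} {x₀ : X} (hx : WeakConv x x₀) {φ : ℕ → ℕ}
    (hφ : StrictMono φ) : WeakConv (x ∘ φ) x₀ :=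
  fun y => (hx y).comp hφ.tendsto_atTop

theorem stmt3 (Φ Ψ : X → X) (hΦ : SPlus Φ) (hΨ : Quasimonotone Ψ) :
    SPlus (fun x => Φ x + Ψ x) := by
  intro x x₀ hw hsum
  by_contra hnot
  rw [Metric.tendsto_atTop] at hnot
  push_neg at hnot
  obtain ⟨ε₀, hε₀, hfar⟩ := hnot
  -- extract subsequence staying far
  have hfreq : ∃ᶠ n in atTop, ε₀ ≤ dist (x n) x₀ := by
    rw [frequently_atTop]
    exact fun N => (hfar N).imp (fun n ⟨h1, h2⟩ => ⟨h1, h2⟩)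
  obtain ⟨φ, hφmono, hφfar⟩ := extraction_of_frequently_atTop hfreq
  have hwφ : WeakConv (x ∘ φ) x₀ := weakConv_comp hw hφmono
  have hΨφ := hΨ (x ∘ φ) x₀ hwφ
  -- for each j, frequently Ψ-term ≥ -1/(j+1) and eventually sum ≤ 1/(j+1)
  have hpos : ∀ j : ℕ, (0:ℝ) < 1 / (j + 1) := fun j => by positivity
  have hkey : ∀ j : ℕ, ∃ᶠ k in atTop,
      -(1 / (j + 1 : ℝ)) ≤ ⟪Ψ (x (φ k)), x (φ k) - x₀⟫ ∧
      ⟪Φ (x (φ k)) + Ψ (x (φ k)), x (φ k) - x₀⟫ ≤ 1 / (j + 1 : ℝ) := by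
    intro j
    have h1 := hΨφ (1 / (j + 1)) (hpos j)
    have h2 : ∀ᶠ k in atTop,
        ⟪Φ (x (φ k)) + Ψ (x (φ k)), x (φ k) - x₀⟫ ≤ 1 / (j + 1 : ℝ) :=
      hφmono.tendsto_atTop.eventually (hsum (1 / (j + 1)) (hpos j))
    exact h1.and_eventually h2
  obtain ⟨k, hkmono, hk⟩ := extraction_forall_of_frequently hkey
  set σ : ℕ → ℕ := φ ∘ k with hσ
  have hσmono : StrictMono σ := hφmono.comp hkmono
  have hwσ : WeakConv (x ∘ σ) x₀ := weakConv_comp hw hσmono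
  have hΦle : ∀ j : ℕ, ⟪Φ (x (σ j)), x (σ j) - x₀⟫ ≤ 2 / (j + 1 : ℝ) := by
    intro j
    obtain ⟨h1, h2⟩ := hk j
    have := inner_add_left (𝕜 := ℝ) (Φ (x (φ (k j)))) (Ψ (x (φ (k j)))) (x (φ (k j)) - x₀)
    simp only [hσ, Function.comp]
    have harith : 1 / (j + 1 : ℝ) + 1 / (j + 1 : ℝ) = 2 / (j + 1 : ℝ) := by ring
    linarith [this]
  have hL : LimsupLE0 (fun j => ⟪Φ ((x ∘ σ) j), (x ∘ σ) j - x₀⟫) := by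
    intro ε hε
    have : Tendsto (fun j : ℕ => 2 / (j + 1 : ℝ)) atTop (nhds 0) :=
      tendsto_const_div_atTop_nhds_zero_nat 2 |>.comp (tendsto_add_atTop_nat 1) |>.congr
        (by intro j; simp [Nat.cast_add])
    filter_upwards [this.eventually_le_const hε] with j hj
    exact le_trans (hΦle j) hj
  have htend := hΦ (x ∘ σ) x₀ hwσ hL
  rw [Metric.tendsto_atTop] at htend
  obtain ⟨N, hN⟩ := htend ε₀ hε₀
  exact absurd (hN N le_rfl) (not_lt.mpr (hφfar (k N)))
end

section
/- Let X be a real Hilbert space and Φ : X → X demicontinuous with the (S₊) property. If x₀ is an isolated zero of Φ (some ball B_{r}(x₀) contains no other zeros), then x₀ is a strictly isolated zero: there exists r₀ > 0 such that every sequence xₙ with Φxₙ → 0 in norm and ‖xₙ − x₀‖ ≤ r₀ satisfies xₙ → x₀ in norm. -/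
/-!
Approximate zeros near `x₀` are bounded, so every subsequence has a further subsequence
converging weakly to some `y`. Along it `Φ xₙ → 0` in norm while `xₙ - y` stays bounded, so
`⟪Φ xₙ, xₙ - y⟫ → 0`, and (S₊) upgrades weak to strong convergence; demicontinuity then makes `y`
a zero of `Φ`. Taking `r₀ = r / 2`, this zero lies in the ball where `x₀` is the only zero, so
`y = x₀`: every subsequence has a further subsequence converging to `x₀`.
-/

open Filter Topology

local notation "⟪" x ", " y "⟫" => @inner ℝ _ _ x y

variable {X : Type*} [NormedAddCommGroup X] [InnerProductSpace ℝ X] [CompleteSpace X]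

open Metric TopologicalSpace

section

variable {E : Type*} [NormedAddCommGroup E] [InnerProductSpace ℝ E]

theorem tendsto_inner_of_tendsto_zero_of_norm_le {ι : Type*} {l : Filter ι} {a b : ι → E}
    {C : ℝ} (ha : Tendsto a l (𝓝 0)) (hb : ∀ i, ‖b i‖ ≤ C) :
    Tendsto (fun i => ⟪a i, b i⟫) l (𝓝 0) := by
  refine squeeze_zero_norm (fun i => (norm_inner_le_norm _ _).trans
    (mul_le_mul_of_nonneg_left (hb i) (norm_nonneg _))) ?_
  simpa using ha.norm.mul_const C

theorem LimsupLE0.of_tendsto_zero {a : ℕ → ℝ} (h : Tendsto a atTop (𝓝 0)) : LimsupLE0 a :=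
  fun _ hε => h.eventually_le_const hε

theorem WeakConv.of_tendsto {x : ℕ → E} {y : E} (h : Tendsto x atTop (𝓝 y)) : WeakConv x y :=
  fun _ => h.inner tendsto_const_nhds

theorem WeakConv.unique {x : ℕ → E} {y y' : E} (h : WeakConv x y) (h' : WeakConv x y') :
    y = y' := by
  rw [← sub_eq_zero, ← inner_self_eq_zero (𝕜 := ℝ)]
  have := tendsto_nhds_unique (h (y - y')) (h' (y - y'))
  rwa [← sub_eq_zero, ← inner_sub_left] at this

theorem Demicontinuous.map_eq_zero_of_tendsto {Φ : E → E} (hΦ : Demicontinuous Φ)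
    {x : ℕ → E} {y : E} (hx : Tendsto x atTop (𝓝 y)) (hΦx : Tendsto (Φ ∘ x) atTop (𝓝 0)) :
    Φ y = 0 :=
  (hΦ x y hx).unique (WeakConv.of_tendsto hΦx)

theorem exists_strictMono_weakConv_of_norm_le [CompleteSpace E] {x : ℕ → E} {M : ℝ}
    (hx : ∀ n, ‖x n‖ ≤ M) : ∃ (φ : ℕ → ℕ) (y : E), StrictMono φ ∧ WeakConv (x ∘ φ) y := by
  -- Sequential Banach–Alaoglu on the separable closed span `K` of the sequence; the weak-* limit
  -- is brought back to `E` by the Riesz map of `K`, and tested against `z` through its projection.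
  set K := (Submodule.span ℝ (Set.range x)).topologicalClosure
  have hxK : ∀ n, x n ∈ K := fun n =>
    Submodule.le_topologicalClosure _ (Submodule.subset_span ⟨n, rfl⟩)
  have : SeparableSpace K :=
    ((Set.countable_range x).isSeparable.span (R := ℝ)).closure.separableSpace
  let f : ℕ → StrongDual ℝ K := fun n => innerSL ℝ (⟨x n, hxK n⟩ : K)
  have hf : ∀ n, StrongDual.toWeakDual (f n) ∈ WeakDual.toStrongDual ⁻¹' closedBall 0 M :=
    fun n => mem_closedBall_zero_iff.2 ((innerSL_apply_norm ℝ (⟨x n, hxK n⟩ : K)).trans_le (hx n))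
  obtain ⟨F, -, φ, hφ, hF⟩ := WeakDual.isSeqCompact_closedBall ℝ K 0 M hf
  refine ⟨φ, (InnerProductSpace.toDual ℝ K).symm (WeakDual.toStrongDual F), hφ, fun z => ?_⟩
  have hFz := ((WeakDual.eval_continuous (K.orthogonalProjectionOnto z)).tendsto F).comp hF
  rw [← K.inner_orthogonalProjectionOnto_eq_of_mem_left, InnerProductSpace.toDual_symm_apply]
  exact hFz.congr fun n => K.inner_orthogonalProjectionOnto_eq_of_mem_left ⟨x (φ n), hxK _⟩ z

theorem SPlus.exists_subseq_tendsto_of_map_tendsto_zero [CompleteSpace E] {Φ : E → E}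
    (hS : SPlus Φ) (hΦ : Demicontinuous Φ) {x : ℕ → E} {M : ℝ} (hx : ∀ n, ‖x n‖ ≤ M)
    (hΦx : Tendsto (Φ ∘ x) atTop (𝓝 0)) :
    ∃ (φ : ℕ → ℕ) (y : E), StrictMono φ ∧ Φ y = 0 ∧ Tendsto (x ∘ φ) atTop (𝓝 y) := by
  obtain ⟨φ, y, hφ, hweak⟩ := exists_strictMono_weakConv_of_norm_le hx
  have hΦxφ : Tendsto (Φ ∘ x ∘ φ) atTop (𝓝 0) := hΦx.comp hφ.tendsto_atTop
  have hbdd : ∀ n, ‖(x ∘ φ) n - y‖ ≤ M + ‖y‖ := fun n =>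
    (norm_sub_le _ _).trans (add_le_add_left (hx _) _)
  have hy : Tendsto (x ∘ φ) atTop (𝓝 y) := hS _ y hweak
    (LimsupLE0.of_tendsto_zero (tendsto_inner_of_tendsto_zero_of_norm_le hΦxφ hbdd))
  exact ⟨φ, y, hφ, hΦ.map_eq_zero_of_tendsto hy hΦxφ, hy⟩

end

theorem stmt19_general (Φ : X → X) (hdemi : Demicontinuous Φ) (hS : SPlus Φ)
    (x₀ : X) (r : ℝ) (hr : 0 < r)
    (hisol : ∀ x ∈ Metric.ball x₀ r, Φ x = 0 → x = x₀) :
    ∃ r₀ : ℝ, 0 < r₀ ∧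
      ∀ x : ℕ → X, Tendsto (fun n => Φ (x n)) atTop (nhds 0) →
        (∀ n, ‖x n - x₀‖ ≤ r₀) → Tendsto x atTop (nhds x₀) := by
  refine ⟨r / 2, half_pos hr, fun x hΦx hx => tendsto_of_subseq_tendsto fun ns hns => ?_⟩
  have hbdd : ∀ n, ‖x (ns n)‖ ≤ ‖x₀‖ + r / 2 := fun n =>
    (norm_le_norm_add_norm_sub' _ x₀).trans (add_le_add_right (hx _) _)
  obtain ⟨φ, y, -, hy0, hy⟩ :=
    hS.exists_subseq_tendsto_of_map_tendsto_zero hdemi hbdd (hΦx.comp hns)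
  have hyx₀ : ‖y - x₀‖ ≤ r / 2 :=
    le_of_tendsto (hy.sub_const x₀).norm (Eventually.of_forall fun n => hx _)
  obtain rfl := hisol y (by rw [mem_ball, dist_eq_norm]; linarith) hy0
  exact ⟨φ, hy⟩

theorem stmt19 (Φ : X → X) (hdemi : Demicontinuous Φ) (hS : SPlus Φ)
    (x₀ : X) (hx₀ : Φ x₀ = 0) (r : ℝ) (hr : 0 < r)
    (hisol : ∀ x ∈ Metric.ball x₀ r, Φ x = 0 → x = x₀) :
    ∃ r₀ : ℝ, 0 < r₀ ∧
      ∀ x : ℕ → X, Tendsto (fun n => Φ (x n)) atTop (nhds 0) →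
        (∀ n, ‖x n - x₀‖ ≤ r₀) → Tendsto x atTop (nhds x₀) :=
  stmt19_general Φ hdemi hS x₀ r hr hisol
end
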